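/- In the SLAR game, a pure-strategy Nash equilibrium exists. Concretely, let δ*(x,y) shift each robust feature i (having |μᵢ| > ε, say μᵢ > 0) by -yε and each non-robust feature j (|μⱼ| ≤ ε) by -yμⱼ, and let w* be the unique minimizer of the regularized SVM objective on the perturbed distribution. Then (δ*, w*) is a Nash equilibrium. -/

import Mathlib

open MeasureTheory Finset
open scoped ENNReal

/-- The joint distribution of `(x,y)` on `ℝ^d × {-1,1}`: with probability `q` the label is `1`
and the features are drawn from the product measure `Measure.pi ηp` (features conditionally
independent given the label), with probability `1-q` the label is `-1` and the features are
drawn from `Measure.pi ηn`. -/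
noncomputable def jointMeasure {d : ℕ} (ηp ηn : Fin d → Measure ℝ) (q : ℝ≥0∞) :
    Measure ((Fin d → ℝ) × ℝ) :=
  q • (Measure.pi ηp).map (fun x => (x, (1 : ℝ))) +
    (1 - q) • (Measure.pi ηn).map (fun x => (x, (-1 : ℝ)))

noncomputable def svmLoss {d : ℕ} (μ : Measure ((Fin d → ℝ) × ℝ)) (lam : ℝ)
    (w : Fin d → ℝ) : ℝ :=
  (∫ p, max 0 (1 - p.2 * ∑ i, w i * p.1 i) ∂μ) + lam / 2 * ∑ i, (w i) ^ 2

noncomputable def slarPayoff {d : ℕ} (μ : Measure ((Fin d → ℝ) × ℝ)) (lam : ℝ)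
    (δ : (Fin d → ℝ) × ℝ → Fin d → ℝ) (w : Fin d → ℝ) : ℝ :=
  (∫ p, max 0 (1 - p.2 * ∑ i, w i * (p.1 i + δ p i)) ∂μ) + lam / 2 * ∑ i, (w i) ^ 2

/-- The equilibrium perturbation: shift each robust feature (with `μᵢ > ε`) by `-yε` and each
non-robust feature (with `|μᵢ| ≤ ε`) by `-yμᵢ` (written with `sign y`, which equals `y` on
the labels `±1`). -/
noncomputable def eqPerturbation {d : ℕ} (μv : Fin d → ℝ) (ε : ℝ)
    (p : (Fin d → ℝ) × ℝ) : Fin d → ℝ :=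
  fun i => if ε < |μv i| then -Real.sign p.2 * ε else -Real.sign p.2 * μv i

/-! Against `w*`, the adversary lowers every margin `y wᵢ (xᵢ + δᵢ)` as far as the budget allows,
which `δ*` does as soon as `w*` is nonnegative on robust features and vanishes on non-robust ones.
That sign pattern is forced by the optimality of `w*`: if `w*ᵢ ≠ 0` and `w*ᵢ (aᵢ - μᵢ) ≥ 0`, where
`a` is the shift applied by `δ*`, then setting `w*ᵢ` to zero does not increase the expected hinge
loss (Jensen's inequality in the independent coordinate `xᵢ`, of conditional mean `± μᵢ`) and
strictly decreases the regulariser. -/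

open Function

lemma Real.measurable_sign : Measurable Real.sign :=
  Measurable.ite measurableSet_Iio measurable_const
    (Measurable.ite measurableSet_Ioi measurable_const measurable_const)

lemma Real.sign_mul_self (r : ℝ) : Real.sign r * r = |r| := by
  rcases lt_trichotomy r 0 with h | rfl | h
  · simp [Real.sign_of_neg h, abs_of_neg h]
  · simp
  · simp [Real.sign_of_pos h, abs_of_pos h]

lemma Real.abs_sign_le_one (r : ℝ) : |Real.sign r| ≤ 1 := by
  rcases Real.sign_apply_eq r with h | h | h <;> simp [h]

lemma Finset.sum_apply_update_zero {ι α M : Type*} [Fintype ι] [DecidableEq ι] [Zero α]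
    [AddCommGroup M] (F : ι → α → M) (hF : ∀ j, F j 0 = 0) (w : ι → α) (i : ι) :
    ∑ j, F j (update w i 0 j) = ∑ j, F j (w j) - F i (w i) := by
  rw [← Finset.add_sum_erase _ _ (mem_univ i),
    ← Finset.add_sum_erase _ (fun j => F j (w j)) (mem_univ i)]
  simp only [update_self, hF, zero_add, add_sub_cancel_left]
  exact Finset.sum_congr rfl fun j hj => by rw [update_of_ne (ne_of_mem_erase hj)]

lemma integral_pi_le_of_forall_integral_insertNth_le {n : ℕ} {α : Fin (n + 1) → Type*}
    [∀ j, MeasurableSpace (α j)] (μ : ∀ j, Measure (α j)) [∀ j, SigmaFinite (μ j)]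
    (i : Fin (n + 1)) {f g : (∀ j, α j) → ℝ}
    (hf : Integrable f (Measure.pi μ)) (hg : Integrable g (Measure.pi μ))
    (h : ∀ r, ∫ t, f (i.insertNth t r) ∂μ i ≤ ∫ t, g (i.insertNth t r) ∂μ i) :
    ∫ x, f x ∂Measure.pi μ ≤ ∫ x, g x ∂Measure.pi μ := by
  have e := (measurePreserving_piFinSuccAbove μ i).symm
  have emb := (MeasurableEquiv.piFinSuccAbove α i).symm.measurableEmbedding
  have hf' : Integrable (fun z => f ((MeasurableEquiv.piFinSuccAbove α i).symm z)) _ :=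
    (e.integrable_comp_emb emb).2 hf
  have hg' : Integrable (fun z => g ((MeasurableEquiv.piFinSuccAbove α i).symm z)) _ :=
    (e.integrable_comp_emb emb).2 hg
  rw [← e.integral_comp' f, ← e.integral_comp' g, integral_prod_symm _ hf',
    integral_prod_symm _ hg']
  exact integral_mono hf'.integral_prod_right hg'.integral_prod_right h

lemma max_zero_add_mul_integral_le (ν : Measure ℝ) [IsProbabilityMeasure ν]
    (hν : Integrable id ν) (c v : ℝ) :
    max 0 (c + v * ∫ t, t ∂ν) ≤ ∫ t, max 0 (c + v * t) ∂ν := by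
  have hlin : Integrable (fun t => v * t) ν := hν.const_mul v
  have haff : Integrable (fun t => c + v * t) ν := (integrable_const c).add hlin
  refine max_le (integral_nonneg fun t => le_max_left _ _) ?_
  calc c + v * ∫ t, t ∂ν = ∫ t, (c + v * t) ∂ν := by
        rw [integral_add (integrable_const c) hlin, integral_const_mul]; simp
    _ ≤ ∫ t, max 0 (c + v * t) ∂ν :=
        integral_mono haff ((integrable_const 0).sup haff) fun t => le_max_right _ _

lemma integrable_max_zero_affine {ι : Type*} [Fintype ι] (η : ι → Measure ℝ)
    [∀ j, IsFiniteMeasure (η j)] (hη : ∀ j, Integrable id (η j)) (c : ℝ) (v : ι → ℝ) :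
    Integrable (fun x => max 0 (c + ∑ j, v j * x j)) (Measure.pi η) :=
  (integrable_const 0).sup ((integrable_const c).add
    (integrable_finsetSum _ fun j _ => (integrable_eval (hη j)).const_mul (v j)))

lemma integral_max_zero_affine_update_le {n : ℕ} (η : Fin n → Measure ℝ)
    [∀ j, IsProbabilityMeasure (η j)] (hη : ∀ j, Integrable id (η j)) {c₀ c : ℝ}
    (v : Fin n → ℝ) (i : Fin n) (hc : c₀ ≤ c + v i * ∫ t, t ∂η i) :
    ∫ x, max 0 (c₀ + ∑ j, update v i 0 j * x j) ∂Measure.pi η ≤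
      ∫ x, max 0 (c + ∑ j, v j * x j) ∂Measure.pi η := by
  cases n with
  | zero => exact i.elim0
  | succ n =>
  refine integral_pi_le_of_forall_integral_insertNth_le η i (integrable_max_zero_affine η hη _ _)
    (integrable_max_zero_affine η hη _ _) fun r => ?_
  have hsum : ∀ (u : Fin (n + 1) → ℝ) t,
      ∑ j, u j * (i.insertNth t r : Fin (n + 1) → ℝ) j =
        u i * t + ∑ k, u (i.succAbove k) * r k := fun u t => by
    simp [Fin.sum_univ_succAbove _ i]
  set s := ∑ k, v (i.succAbove k) * r k
  calc ∫ t, max 0 (c₀ + ∑ j, update v i 0 j * (i.insertNth t r : Fin (n + 1) → ℝ) j) ∂η i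
        = max 0 (c₀ + s) := by simp [hsum, s]
    _ ≤ max 0 ((c + s) + v i * ∫ t, t ∂η i) := max_le_max le_rfl (by linarith)
    _ ≤ ∫ t, max 0 ((c + s) + v i * t) ∂η i := max_zero_add_mul_integral_le _ (hη i) _ _
    _ = ∫ t, max 0 (c + ∑ j, v j * (i.insertNth t r : Fin (n + 1) → ℝ) j) ∂η i := by
        simp only [hsum, s]; ring_nf

section SLAR

variable {d : ℕ} (ηp ηn : Fin d → Measure ℝ) {q : ℝ≥0∞}

lemma integrable_jointMeasure (hq : q ≤ 1) {F : (Fin d → ℝ) × ℝ → ℝ} (hF : Measurable F)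
    (hp : Integrable (fun x => F (x, 1)) (Measure.pi ηp))
    (hn : Integrable (fun x => F (x, -1)) (Measure.pi ηn)) :
    Integrable F (jointMeasure ηp ηn q) := by
  have hq : q ≠ ⊤ := ne_top_of_le_ne_top ENNReal.one_ne_top hq
  refine Integrable.add_measure (Integrable.smul_measure ?_ hq)
    (Integrable.smul_measure ?_ (ne_top_of_le_ne_top ENNReal.one_ne_top tsub_le_self))
  · exact (integrable_map_measure hF.aestronglyMeasurable (by fun_prop)).2 hp
  · exact (integrable_map_measure hF.aestronglyMeasurable (by fun_prop)).2 hn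

lemma integral_jointMeasure (hq : q ≤ 1) {F : (Fin d → ℝ) × ℝ → ℝ} (hF : Measurable F)
    (hp : Integrable (fun x => F (x, 1)) (Measure.pi ηp))
    (hn : Integrable (fun x => F (x, -1)) (Measure.pi ηn)) :
    ∫ z, F z ∂jointMeasure ηp ηn q =
      q.toReal * ∫ x, F (x, 1) ∂Measure.pi ηp +
        (1 - q).toReal * ∫ x, F (x, -1) ∂Measure.pi ηn := by
  have hq : q ≠ ⊤ := ne_top_of_le_ne_top ENNReal.one_ne_top hq
  rw [jointMeasure, integral_add_measure, integral_smul_measure, integral_smul_measure,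
    integral_map (by fun_prop) hF.aestronglyMeasurable,
    integral_map (by fun_prop) hF.aestronglyMeasurable, smul_eq_mul, smul_eq_mul]
  · exact ((integrable_map_measure hF.aestronglyMeasurable (by fun_prop)).2 hp).smul_measure hq
  · exact ((integrable_map_measure hF.aestronglyMeasurable (by fun_prop)).2 hn).smul_measure
      (ne_top_of_le_ne_top ENNReal.one_ne_top tsub_le_self)

def slarHinge (δ : (Fin d → ℝ) × ℝ → Fin d → ℝ) (w : Fin d → ℝ) (z : (Fin d → ℝ) × ℝ) : ℝ :=
  max 0 (1 - z.2 * ∑ i, w i * (z.1 i + δ z i))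

lemma slarPayoff_eq (μ : Measure ((Fin d → ℝ) × ℝ)) (lam : ℝ) (δ : (Fin d → ℝ) × ℝ → Fin d → ℝ)
    (w : Fin d → ℝ) :
    slarPayoff μ lam δ w = ∫ z, slarHinge δ w z ∂μ + lam / 2 * ∑ i, w i ^ 2 := rfl

lemma measurable_slarHinge {δ : (Fin d → ℝ) × ℝ → Fin d → ℝ} (hδ : Measurable δ)
    (w : Fin d → ℝ) : Measurable (slarHinge δ w) := by
  unfold slarHinge; fun_prop

lemma integrable_slarHinge_prodMk [∀ j, IsFiniteMeasure (ηp j)]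
    (hηp : ∀ j, Integrable id (ηp j)) {δ : (Fin d → ℝ) × ℝ → Fin d → ℝ} (hδ : Measurable δ)
    {C : ℝ} (hδC : ∀ z i, |δ z i| ≤ C) (w : Fin d → ℝ) (y : ℝ) :
    Integrable (fun x => slarHinge δ w (x, y)) (Measure.pi ηp) := by
  have hδy : ∀ i, Integrable (fun x => δ (x, y) i) (Measure.pi ηp) := fun i =>
    Integrable.of_bound (hδ.comp measurable_prodMk_right).eval.aestronglyMeasurable C
      (ae_of_all _ fun x => hδC _ i)
  exact (integrable_const 0).sup ((integrable_const 1).sub ((integrable_finsetSum _ fun i _ =>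
    ((integrable_eval (hηp i)).add (hδy i)).const_mul (w i)).const_mul y))

lemma integrable_slarHinge [∀ j, IsFiniteMeasure (ηp j)] [∀ j, IsFiniteMeasure (ηn j)]
    (hq : q ≤ 1) (hηp : ∀ j, Integrable id (ηp j)) (hηn : ∀ j, Integrable id (ηn j))
    {δ : (Fin d → ℝ) × ℝ → Fin d → ℝ} (hδ : Measurable δ) {C : ℝ} (hδC : ∀ z i, |δ z i| ≤ C)
    (w : Fin d → ℝ) : Integrable (slarHinge δ w) (jointMeasure ηp ηn q) :=
  integrable_jointMeasure ηp ηn hq (measurable_slarHinge hδ w)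
    (integrable_slarHinge_prodMk ηp hηp hδ hδC w 1)
    (integrable_slarHinge_prodMk ηn hηn hδ hδC w (-1))

noncomputable def eqShift (μv : Fin d → ℝ) (ε : ℝ) : Fin d → ℝ :=
  fun i => if ε < |μv i| then ε else μv i

variable (μv : Fin d → ℝ) {ε : ℝ}

lemma eqPerturbation_apply (z : (Fin d → ℝ) × ℝ) (i : Fin d) :
    eqPerturbation μv ε z i = -Real.sign z.2 * eqShift μv ε i := by
  unfold eqPerturbation eqShift; split_ifs <;> rfl

lemma measurable_eqPerturbation : Measurable (eqPerturbation (d := d) μv ε) := by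
  refine measurable_pi_lambda _ fun i => ?_
  simp only [eqPerturbation_apply]
  exact (Real.measurable_sign.comp measurable_snd).neg.mul_const _

lemma abs_eqPerturbation_le (hε : 0 ≤ ε) (z : (Fin d → ℝ) × ℝ) (i : Fin d) :
    |eqPerturbation μv ε z i| ≤ ε := by
  have hshift : |eqShift μv ε i| ≤ ε := by
    unfold eqShift; split_ifs with h
    · exact (abs_of_nonneg hε).le
    · exact not_lt.1 h
  rw [eqPerturbation_apply, abs_mul, abs_neg]
  exact (mul_le_of_le_one_left (abs_nonneg _) (Real.abs_sign_le_one _)).trans hshift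

lemma slarHinge_eqPerturbation {y : ℝ} (hy : y = 1 ∨ y = -1) (w x : Fin d → ℝ) :
    slarHinge (eqPerturbation μv ε) w (x, y) =
      max 0 ((1 + ∑ i, w i * eqShift μv ε i) + ∑ i, -y * w i * x i) := by
  rcases hy with rfl | rfl <;>
    simp [slarHinge, eqPerturbation_apply, Real.sign_one, Real.sign_neg, mul_add,
      Finset.sum_add_distrib, Finset.mul_sum] <;> congr 1 <;> ring

lemma slarHinge_le_slarHinge_eqPerturbation {w : Fin d → ℝ}
    (hrob : ∀ i, ε < |μv i| → 0 ≤ w i) (hnon : ∀ i, ¬ε < |μv i| → w i = 0)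
    {δ : (Fin d → ℝ) × ℝ → Fin d → ℝ} (z : (Fin d → ℝ) × ℝ) (hδ : ∀ i, |δ z i| ≤ ε) :
    slarHinge δ w z ≤ slarHinge (eqPerturbation μv ε) w z := by
  refine max_le_max le_rfl (sub_le_sub_left ?_ 1)
  rw [Finset.mul_sum, Finset.mul_sum]
  refine Finset.sum_le_sum fun i _ => ?_
  by_cases hi : ε < |μv i|
  · have hyδ : -(|z.2| * ε) ≤ z.2 * δ z i := by
      have : |z.2 * δ z i| ≤ |z.2| * ε := by
        rw [abs_mul]; exact mul_le_mul_of_nonneg_left (hδ i) (abs_nonneg _)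
      exact (neg_le_neg this).trans (neg_abs_le _)
    rw [← Real.sign_mul_self] at hyδ
    rw [eqPerturbation_apply, eqShift, if_pos hi]
    nlinarith [mul_nonneg (hrob i hi) (sub_nonneg.2 hyδ)]
  · simp [hnon i hi]

lemma integral_slarHinge_eqPerturbation_update_le (η : Fin d → Measure ℝ)
    [∀ j, IsProbabilityMeasure (η j)] (hη : ∀ j, Integrable id (η j)) {y : ℝ}
    (hy : y = 1 ∨ y = -1) (hmean : ∀ j, ∫ t, t ∂η j = y * μv j) {w : Fin d → ℝ} {i : Fin d}
    (hw : w i * μv i ≤ w i * eqShift μv ε i) :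
    ∫ x, slarHinge (eqPerturbation μv ε) (update w i 0) (x, y) ∂Measure.pi η ≤
      ∫ x, slarHinge (eqPerturbation μv ε) w (x, y) ∂Measure.pi η := by
  have hyy : y * y = 1 := by rcases hy with rfl | rfl <;> norm_num
  have hupdate : ∀ j, -y * update w i 0 j = update (fun j => -y * w j) i 0 j := fun j => by
    rw [apply_update (fun _ t => -y * t), mul_zero]
  simp only [slarHinge_eqPerturbation μv hy, hupdate]
  refine integral_max_zero_affine_update_le η hη _ i ?_
  rw [Finset.sum_apply_update_zero (fun j t => t * eqShift μv ε j) (fun _ => zero_mul _), hmean]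
  linear_combination hw + w i * μv i * hyy

variable {ηp ηn} [∀ j, IsProbabilityMeasure (ηp j)] [∀ j, IsProbabilityMeasure (ηn j)]
  (hq : q ≤ 1) (hip : ∀ j, Integrable id (ηp j)) (hin : ∀ j, Integrable id (ηn j))
include hq hip hin

lemma slarPayoff_update_zero_lt (hε : 0 ≤ ε) {lam : ℝ} (hlam : 0 < lam)
    (hmeanp : ∀ j, ∫ t, t ∂ηp j = μv j) (hmeann : ∀ j, ∫ t, t ∂ηn j = -μv j)
    {w : Fin d → ℝ} {i : Fin d} (hwi : w i ≠ 0) (hw : w i * μv i ≤ w i * eqShift μv ε i) :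
    slarPayoff (jointMeasure ηp ηn q) lam (eqPerturbation μv ε) (update w i 0) <
      slarPayoff (jointMeasure ηp ηn q) lam (eqPerturbation μv ε) w := by
  have hδ := measurable_eqPerturbation (d := d) μv (ε := ε)
  have hδε := abs_eqPerturbation_le μv hε
  have hint := fun v => integrable_slarHinge_prodMk _ hip hδ hδε v 1
  have hint' := fun v => integrable_slarHinge_prodMk _ hin hδ hδε v (-1)
  have hhinge : ∫ z, slarHinge (eqPerturbation μv ε) (update w i 0) z ∂jointMeasure ηp ηn q ≤
      ∫ z, slarHinge (eqPerturbation μv ε) w z ∂jointMeasure ηp ηn q := by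
    rw [integral_jointMeasure ηp ηn hq (measurable_slarHinge hδ _) (hint _) (hint' _),
      integral_jointMeasure ηp ηn hq (measurable_slarHinge hδ _) (hint _) (hint' _)]
    refine add_le_add (mul_le_mul_of_nonneg_left ?_ ENNReal.toReal_nonneg)
      (mul_le_mul_of_nonneg_left ?_ ENNReal.toReal_nonneg)
    · exact integral_slarHinge_eqPerturbation_update_le μv ηp hip (.inl rfl)
        (fun j => (hmeanp j).trans (one_mul _).symm) hw
    · exact integral_slarHinge_eqPerturbation_update_le μv ηn hin (.inr rfl)
        (fun j => (hmeann j).trans (neg_one_mul _).symm) hw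
  have hreg := Finset.sum_apply_update_zero (fun (_ : Fin d) (t : ℝ) => t ^ 2)
    (fun _ => zero_pow two_ne_zero) w i
  rw [slarPayoff_eq, slarPayoff_eq, hreg]
  nlinarith [mul_pos hlam (sq_pos_of_ne_zero hwi)]

lemma sign_pattern_of_forall_slarPayoff_le (hε : 0 ≤ ε) {lam : ℝ} (hlam : 0 < lam)
    (hmeanp : ∀ j, ∫ t, t ∂ηp j = μv j) (hmeann : ∀ j, ∫ t, t ∂ηn j = -μv j)
    (hrobust : ∀ i, ε < |μv i| → ε < μv i) {w : Fin d → ℝ}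
    (hmin : ∀ v, slarPayoff (jointMeasure ηp ηn q) lam (eqPerturbation μv ε) w ≤
      slarPayoff (jointMeasure ηp ηn q) lam (eqPerturbation μv ε) v) :
    (∀ i, ε < |μv i| → 0 ≤ w i) ∧ (∀ i, ¬ε < |μv i| → w i = 0) := by
  have hzero : ∀ i, w i * μv i ≤ w i * eqShift μv ε i → w i = 0 := fun i hw =>
    by_contra fun hwi => (hmin _).not_gt
      (slarPayoff_update_zero_lt μv hq hip hin hε hlam hmeanp hmeann hwi hw)
  refine ⟨fun i hi => ?_, fun i hi => hzero i (by simp [eqShift, hi])⟩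
  by_contra! hneg
  have hshift : eqShift μv ε i = ε := if_pos hi
  exact hneg.ne (hzero i (by rw [hshift]; nlinarith [hrobust i hi]))

lemma slarPayoff_le_slarPayoff_eqPerturbation (hε : 0 ≤ ε) (lam : ℝ) {w : Fin d → ℝ}
    (hrob : ∀ i, ε < |μv i| → 0 ≤ w i) (hnon : ∀ i, ¬ε < |μv i| → w i = 0)
    {δ : (Fin d → ℝ) × ℝ → Fin d → ℝ} (hδ : Measurable δ) (hδε : ∀ z i, |δ z i| ≤ ε) :
    slarPayoff (jointMeasure ηp ηn q) lam δ w ≤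
      slarPayoff (jointMeasure ηp ηn q) lam (eqPerturbation μv ε) w := by
  rw [slarPayoff_eq, slarPayoff_eq]
  gcongr 1
  exact integral_mono (integrable_slarHinge ηp ηn hq hip hin hδ hδε w)
    (integrable_slarHinge ηp ηn hq hip hin (measurable_eqPerturbation μv)
      (abs_eqPerturbation_le μv hε) w)
    fun z => slarHinge_le_slarHinge_eqPerturbation μv hrob hnon z (hδε z)

end SLAR

/-- existence of a pure-strategy Nash equilibrium of the SLAR game. Taking
`δ*` to shift every robust feature `i` (with `μᵢ > ε`, wlog positive) by `-yε` and every
non-robust feature by `-yμⱼ`, and `w*` the minimizer of the regularized SVM objective on the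
perturbed data, the pair `(δ*, w*)` is a Nash equilibrium: `δ*` is an admissible best response
against `w*`, and `w*` is a best response against `δ*`. -/
theorem nash_equilibrium_exists {d : ℕ} (ηp ηn : Fin d → Measure ℝ)
    [∀ i, IsProbabilityMeasure (ηp i)] [∀ i, IsProbabilityMeasure (ηn i)]
    (q : ℝ≥0∞) (hq : q ≤ 1) (lam ε : ℝ) (hlam : 0 < lam) (hε : 0 ≤ ε)
    (μv : Fin d → ℝ)
    (hip : ∀ j, Integrable (fun t : ℝ => t) (ηp j))
    (hin : ∀ j, Integrable (fun t : ℝ => t) (ηn j))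
    (hmeanp : ∀ i, (∫ t, t ∂(ηp i)) = μv i)
    (hmeann : ∀ i, (∫ t, t ∂(ηn i)) = -(μv i))
    (hwlog : ∀ i, ε < |μv i| → ε < μv i)
    (wstar : Fin d → ℝ)
    (hmin : ∀ w, slarPayoff (jointMeasure ηp ηn q) lam (eqPerturbation μv ε) wstar ≤
      slarPayoff (jointMeasure ηp ηn q) lam (eqPerturbation μv ε) w) :
    Measurable (eqPerturbation μv ε (d := d)) ∧
    (∀ p i, |eqPerturbation μv ε p i| ≤ ε) ∧
    (∀ δ : (Fin d → ℝ) × ℝ → Fin d → ℝ, Measurable δ → (∀ p i, |δ p i| ≤ ε) →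
      slarPayoff (jointMeasure ηp ηn q) lam δ wstar ≤
        slarPayoff (jointMeasure ηp ηn q) lam (eqPerturbation μv ε) wstar) ∧
    (∀ w, slarPayoff (jointMeasure ηp ηn q) lam (eqPerturbation μv ε) wstar ≤
      slarPayoff (jointMeasure ηp ηn q) lam (eqPerturbation μv ε) w) := by
  obtain ⟨hrob, hnon⟩ :=
    sign_pattern_of_forall_slarPayoff_le μv hq hip hin hε hlam hmeanp hmeann hwlog hmin
  exact ⟨measurable_eqPerturbation μv, abs_eqPerturbation_le μv hε,
    fun _ hδ hδε => slarPayoff_le_slarPayoff_eqPerturbation μv hq hip hin hε lam hrob hnon hδ hδε,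
    hmin⟩
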